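/- For any real number φ, the average value over r ∈ [0, 2π] of (2cos(3r+φ) + 2cos(r))^4 equals 36 + 8cos(φ); that is, (1/(2π)) ∫₀^{2π} (2cos(3r+φ) + 2cos r)^4 dr = 36 + 8cos(φ). -/
import Mathlib
set_option maxHeartbeats 1000000

open Complex in
lemma keyC_fmt (x φ : ℂ) :
    (2*Complex.cos (3*x+φ) + 2*Complex.cos x)^4 =
      36 + 8*Complex.cos φ + 32*Complex.cos (2*x+0*φ) + 48*Complex.cos (2*x+1*φ) + 2*Complex.cos (4*x+0*φ) + 48*Complex.cos (4*x+1*φ) + 12*Complex.cos (4*x+2*φ) + 8*Complex.cos (6*x+1*φ) + 32*Complex.cos (6*x+2*φ) + 12*Complex.cos (8*x+2*φ) + 8*Complex.cos (8*x+3*φ) + 8*Complex.cos (10*x+3*φ) + 2*Complex.cos (12*x+4*φ) := by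
  have E : ∀ a b : ℕ, Complex.exp (((a:ℂ)*x+(b:ℂ)*φ)*I)
      = Complex.exp (x*I)^a * Complex.exp (φ*I)^b := by
    intro a b
    rw [show ((a:ℂ)*x+(b:ℂ)*φ)*I = (a:ℂ)*(x*I)+(b:ℂ)*(φ*I) by ring, Complex.exp_add,
      Complex.exp_nat_mul, Complex.exp_nat_mul]
  have En : ∀ a b : ℕ, Complex.exp (-((a:ℂ)*x+(b:ℂ)*φ)*I)
      = Complex.exp (-x*I)^a * Complex.exp (-φ*I)^b := by
    intro a b
    rw [show -((a:ℂ)*x+(b:ℂ)*φ)*I = (a:ℂ)*(-x*I)+(b:ℂ)*(-φ*I) by ring, Complex.exp_add,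
      Complex.exp_nat_mul, Complex.exp_nat_mul]
  have e3_1 : Complex.exp ((3*x+φ)*I) = Complex.exp (x*I)^3 * Complex.exp (φ*I)^1 := by
    rw [← E 3 1]; congr 1 <;> (push_cast; try ring)
  have en3_1 : Complex.exp (-(3*x+φ)*I) = Complex.exp (-x*I)^3 * Complex.exp (-φ*I)^1 := by
    rw [← En 3 1]; congr 1 <;> (push_cast; try ring)
  have e2_0 : Complex.exp ((2*x+0*φ)*I) = Complex.exp (x*I)^2 * Complex.exp (φ*I)^0 := by
    rw [← E 2 0]; congr 1 <;> (push_cast; try ring)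
  have en2_0 : Complex.exp (-(2*x+0*φ)*I) = Complex.exp (-x*I)^2 * Complex.exp (-φ*I)^0 := by
    rw [← En 2 0]; congr 1 <;> (push_cast; try ring)
  have e2_1 : Complex.exp ((2*x+1*φ)*I) = Complex.exp (x*I)^2 * Complex.exp (φ*I)^1 := by
    rw [← E 2 1]; congr 1 <;> (push_cast; try ring)
  have en2_1 : Complex.exp (-(2*x+1*φ)*I) = Complex.exp (-x*I)^2 * Complex.exp (-φ*I)^1 := by
    rw [← En 2 1]; congr 1 <;> (push_cast; try ring)
  have e4_0 : Complex.exp ((4*x+0*φ)*I) = Complex.exp (x*I)^4 * Complex.exp (φ*I)^0 := by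
    rw [← E 4 0]; congr 1 <;> (push_cast; try ring)
  have en4_0 : Complex.exp (-(4*x+0*φ)*I) = Complex.exp (-x*I)^4 * Complex.exp (-φ*I)^0 := by
    rw [← En 4 0]; congr 1 <;> (push_cast; try ring)
  have e4_1 : Complex.exp ((4*x+1*φ)*I) = Complex.exp (x*I)^4 * Complex.exp (φ*I)^1 := by
    rw [← E 4 1]; congr 1 <;> (push_cast; try ring)
  have en4_1 : Complex.exp (-(4*x+1*φ)*I) = Complex.exp (-x*I)^4 * Complex.exp (-φ*I)^1 := by
    rw [← En 4 1]; congr 1 <;> (push_cast; try ring)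
  have e4_2 : Complex.exp ((4*x+2*φ)*I) = Complex.exp (x*I)^4 * Complex.exp (φ*I)^2 := by
    rw [← E 4 2]; congr 1 <;> (push_cast; try ring)
  have en4_2 : Complex.exp (-(4*x+2*φ)*I) = Complex.exp (-x*I)^4 * Complex.exp (-φ*I)^2 := by
    rw [← En 4 2]; congr 1 <;> (push_cast; try ring)
  have e6_1 : Complex.exp ((6*x+1*φ)*I) = Complex.exp (x*I)^6 * Complex.exp (φ*I)^1 := by
    rw [← E 6 1]; congr 1 <;> (push_cast; try ring)
  have en6_1 : Complex.exp (-(6*x+1*φ)*I) = Complex.exp (-x*I)^6 * Complex.exp (-φ*I)^1 := by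
    rw [← En 6 1]; congr 1 <;> (push_cast; try ring)
  have e6_2 : Complex.exp ((6*x+2*φ)*I) = Complex.exp (x*I)^6 * Complex.exp (φ*I)^2 := by
    rw [← E 6 2]; congr 1 <;> (push_cast; try ring)
  have en6_2 : Complex.exp (-(6*x+2*φ)*I) = Complex.exp (-x*I)^6 * Complex.exp (-φ*I)^2 := by
    rw [← En 6 2]; congr 1 <;> (push_cast; try ring)
  have e8_2 : Complex.exp ((8*x+2*φ)*I) = Complex.exp (x*I)^8 * Complex.exp (φ*I)^2 := by
    rw [← E 8 2]; congr 1 <;> (push_cast; try ring)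
  have en8_2 : Complex.exp (-(8*x+2*φ)*I) = Complex.exp (-x*I)^8 * Complex.exp (-φ*I)^2 := by
    rw [← En 8 2]; congr 1 <;> (push_cast; try ring)
  have e8_3 : Complex.exp ((8*x+3*φ)*I) = Complex.exp (x*I)^8 * Complex.exp (φ*I)^3 := by
    rw [← E 8 3]; congr 1 <;> (push_cast; try ring)
  have en8_3 : Complex.exp (-(8*x+3*φ)*I) = Complex.exp (-x*I)^8 * Complex.exp (-φ*I)^3 := by
    rw [← En 8 3]; congr 1 <;> (push_cast; try ring)
  have e10_3 : Complex.exp ((10*x+3*φ)*I) = Complex.exp (x*I)^10 * Complex.exp (φ*I)^3 := by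
    rw [← E 10 3]; congr 1 <;> (push_cast; try ring)
  have en10_3 : Complex.exp (-(10*x+3*φ)*I) = Complex.exp (-x*I)^10 * Complex.exp (-φ*I)^3 := by
    rw [← En 10 3]; congr 1 <;> (push_cast; try ring)
  have e12_4 : Complex.exp ((12*x+4*φ)*I) = Complex.exp (x*I)^12 * Complex.exp (φ*I)^4 := by
    rw [← E 12 4]; congr 1 <;> (push_cast; try ring)
  have en12_4 : Complex.exp (-(12*x+4*φ)*I) = Complex.exp (-x*I)^12 * Complex.exp (-φ*I)^4 := by
    rw [← En 12 4]; congr 1 <;> (push_cast; try ring)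
  simp only [Complex.cos, e3_1, en3_1, e2_0, en2_0, e2_1, en2_1, e4_0, en4_0, e4_1, en4_1, e4_2, en4_2, e6_1, en6_1, e6_2, en6_2, e8_2, en8_2, e8_3, en8_3, e10_3, en10_3, e12_4, en12_4]
  set u := Complex.exp (x*I) with hu'
  set w := Complex.exp (-x*I) with hw'
  set v := Complex.exp (φ*I) with hv'
  set z := Complex.exp (-φ*I) with hz'
  have huw : u * w = 1 := by
    rw [hu', hw', ← Complex.exp_add, show x*I + -x*I = 0 by ring, Complex.exp_zero]
  have hvz : v * z = 1 := by
    rw [hv', hz', ← Complex.exp_add, show φ*I + -φ*I = 0 by ring, Complex.exp_zero]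
  linear_combination ((6:ℂ) + (4:ℂ)*z + (4:ℂ)*v + (24:ℂ)*v*z + (6:ℂ)*v^2*z^2 + (4:ℂ)*w^2 + (12:ℂ)*w^2*z + (12:ℂ)*w^2*v*z + (12:ℂ)*w^2*v*z^2 + (12:ℂ)*w^4*z + (6:ℂ)*w^4*z^2 + (12:ℂ)*w^4*v*z^2 + (12:ℂ)*w^6*z^2 + (4:ℂ)*w^6*v*z^3 + (4:ℂ)*w^8*z^3 + (6:ℂ)*u*w + (4:ℂ)*u*w*z + (4:ℂ)*u*w*v + (24:ℂ)*u*w*v*z + (6:ℂ)*u*w*v^2*z^2 + (12:ℂ)*u*w^3*z + (12:ℂ)*u*w^3*v*z + (12:ℂ)*u*w^3*v*z^2 + (6:ℂ)*u*w^5*z^2 + (12:ℂ)*u*w^5*v*z^2 + (4:ℂ)*u*w^7*v*z^3 + (4:ℂ)*u^2 + (12:ℂ)*u^2*v + (12:ℂ)*u^2*v*z + (12:ℂ)*u^2*v^2*z + (4:ℂ)*u^2*w^2*z + (4:ℂ)*u^2*w^2*v + (24:ℂ)*u^2*w^2*v*z + (6:ℂ)*u^2*w^2*v^2*z^2 + (12:ℂ)*u^2*w^4*v*z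 + (12:ℂ)*u^2*w^4*v*z^2 + (12:ℂ)*u^2*w^6*v*z^2 + (4:ℂ)*u^2*w^8*v*z^3 + (12:ℂ)*u^3*w*v + (12:ℂ)*u^3*w*v*z + (12:ℂ)*u^3*w*v^2*z + (24:ℂ)*u^3*w^3*v*z + (6:ℂ)*u^3*w^3*v^2*z^2 + (12:ℂ)*u^3*w^5*v*z^2 + (12:ℂ)*u^4*v + (6:ℂ)*u^4*v^2 + (12:ℂ)*u^4*v^2*z + (12:ℂ)*u^4*w^2*v*z + (12:ℂ)*u^4*w^2*v^2*z + (6:ℂ)*u^4*w^4*v^2*z^2 + (6:ℂ)*u^5*w*v^2 + (12:ℂ)*u^5*w*v^2*z + (12:ℂ)*u^5*w^3*v^2*z + (6:ℂ)*u^5*w^5*v^2*z^2 + (12:ℂ)*u^6*v^2 + (4:ℂ)*u^6*v^3*z + (12:ℂ)*u^6*w^2*v^2*z + (4:ℂ)*u^7*w*v^3*z + (4:ℂ)*u^8*v^3 + (4:ℂ)*u^8*w^2*v^3*z) * huw + ((30:ℂ) + (6:ℂ)*v*z + (12:ℂ)*w^2 + (12:ℂ)*w^2*z + (12:ℂ)*w^4*z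 + (4:ℂ)*w^6*z^2 + (12:ℂ)*u^2 + (12:ℂ)*u^2*v + (12:ℂ)*u^4*v + (4:ℂ)*u^6*v^2) * hvz

lemma keyR_fmt (x φ : ℝ) :
    (2*Real.cos (3*x+φ) + 2*Real.cos x)^4 =
      36 + 8*Real.cos φ + 32*Real.cos (2*x+0*φ) + 48*Real.cos (2*x+1*φ) + 2*Real.cos (4*x+0*φ) + 48*Real.cos (4*x+1*φ) + 12*Real.cos (4*x+2*φ) + 8*Real.cos (6*x+1*φ) + 32*Real.cos (6*x+2*φ) + 12*Real.cos (8*x+2*φ) + 8*Real.cos (8*x+3*φ) + 8*Real.cos (10*x+3*φ) + 2*Real.cos (12*x+4*φ) := by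
  have := keyC_fmt x φ
  exact_mod_cast this

noncomputable def F_fmt (φ : ℝ) : ℝ → ℝ := fun r =>
  (36+8*Real.cos φ)*r + 16*Real.sin (2*r+0*φ) + 24*Real.sin (2*r+1*φ) + (1/2)*Real.sin (4*r+0*φ) + 12*Real.sin (4*r+1*φ) + 3*Real.sin (4*r+2*φ) + (4/3)*Real.sin (6*r+1*φ) + (16/3)*Real.sin (6*r+2*φ) + (3/2)*Real.sin (8*r+2*φ) + 1*Real.sin (8*r+3*φ) + (4/5)*Real.sin (10*r+3*φ) + (1/6)*Real.sin (12*r+4*φ)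

theorem fourth_moment_trace (φ : ℝ) :
    (1 / (2 * Real.pi)) *
      ∫ r in (0 : ℝ)..(2 * Real.pi),
        (2 * Real.cos (3 * r + φ) + 2 * Real.cos r) ^ 4 = 36 + 8 * Real.cos φ := by
  have hderiv : ∀ x : ℝ, HasDerivAt (F_fmt φ)
      ((2 * Real.cos (3 * x + φ) + 2 * Real.cos x) ^ 4) x := by
    intro x
    have H : ∀ k m c : ℝ, HasDerivAt (fun r : ℝ => c * Real.sin (k*r + m*φ))
        (c * (Real.cos (k*x+m*φ) * (k*1))) x := fun k m c =>
      HasDerivAt.const_mul c (((HasDerivAt.const_mul k (hasDerivAt_id x)).add_const (m*φ)).sin)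
    have big := ((((((((((((HasDerivAt.const_mul (36+8*Real.cos φ) (hasDerivAt_id x)).add (H 2 0 16)).add (H 2 1 24)).add (H 4 0 (1/2))).add (H 4 1 12)).add (H 4 2 3)).add (H 6 1 (4/3))).add (H 6 2 (16/3))).add (H 8 2 (3/2))).add (H 8 3 1)).add (H 10 3 (4/5))).add (H 12 4 (1/6)))
    have goal_eq : (2 * Real.cos (3 * x + φ) + 2 * Real.cos x) ^ 4
        = (36+8*Real.cos φ)*1 + 16 * (Real.cos (2*x+0*φ) * (2*1)) + 24 * (Real.cos (2*x+1*φ) * (2*1)) + (1/2) * (Real.cos (4*x+0*φ) * (4*1)) + 12 * (Real.cos (4*x+1*φ) * (4*1)) + 3 * (Real.cos (4*x+2*φ) * (4*1)) + (4/3) * (Real.cos (6*x+1*φ) * (6*1)) + (16/3) * (Real.cos (6*x+2*φ) * (6*1)) + (3/2) * (Real.cos (8*x+2*φ) * (8*1)) + 1 * (Real.cos (8*x+3*φ) * (8*1)) + (4/5) * (Real.cos (10*x+3*φ) * (10*1)) + (1/6) * (Real.cos (12*x+4*φ) * (12*1)) := by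
      rw [keyR_fmt x φ]; ring
    rw [goal_eq]
    exact big
  have hint : IntervalIntegrable (fun r : ℝ => (2 * Real.cos (3 * r + φ) + 2 * Real.cos r) ^ 4)
      MeasureTheory.volume 0 (2 * Real.pi) := by
    apply Continuous.intervalIntegrable
    fun_prop
  rw [intervalIntegral.integral_eq_sub_of_hasDerivAt (fun x _ => hderiv x) hint]
  have hF2 : F_fmt φ (2*Real.pi) - F_fmt φ 0 = (36+8*Real.cos φ)*(2*Real.pi) := by
    simp only [F_fmt]
    rw [show (2:ℝ)*(2*Real.pi)+0*φ = 0*φ + ((2:ℕ):ℝ)*(2*Real.pi) by push_cast; ring, Real.sin_add_nat_mul_two_pi, show (2:ℝ)*(2*Real.pi)+1*φ = 1*φ + ((2:ℕ):ℝ)*(2*Real.pi) by push_cast; ring, Real.sin_add_nat_mul_two_pi, show (4:ℝ)*(2*Real.pi)+0*φ = 0*φ + ((4:ℕ):ℝ)*(2*Real.pi) by push_cast; ring, Real.sin_add_nat_mul_two_pi, show (4:ℝ)*(2*Real.pi)+1*φ = 1*φ + ((4:ℕ):ℝ)*(2*Real.pi) by push_cast; ring, Real.sin_add_nat_mul_two_pi,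 show (4:ℝ)*(2*Real.pi)+2*φ = 2*φ + ((4:ℕ):ℝ)*(2*Real.pi) by push_cast; ring, Real.sin_add_nat_mul_two_pi, show (6:ℝ)*(2*Real.pi)+1*φ = 1*φ + ((6:ℕ):ℝ)*(2*Real.pi) by push_cast; ring, Real.sin_add_nat_mul_two_pi, show (6:ℝ)*(2*Real.pi)+2*φ = 2*φ + ((6:ℕ):ℝ)*(2*Real.pi) by push_cast; ring, Real.sin_add_nat_mul_two_pi, show (8:ℝ)*(2*Real.pi)+2*φ = 2*φ + ((8:ℕ):ℝ)*(2*Real.pi) by push_cast; ring, Real.sin_add_nat_mul_two_pi, show (8:ℝ)*(2*Real.pi)+3*φ = 3*φ + ((8:ℕ):ℝ)*(2*Real.pi) by push_cast; ring, Real.sin_add_nat_mul_two_pi, show (10:ℝ)*(2*Real.pi)+3*φ = 3*φ + ((10:ℕ):ℝ)*(2*Real.pi) by push_cast; ring, Real.sin_add_nat_mul_two_pi, show (12:ℝ)*(2*Real.pi)+4*φ = 4*φ + ((12:ℕ):ℝ)*(2*Real.pi) by push_cast; ring, Real.sin_add_nat_mul_two_pi, show (2:ℝ)*0+0*φ = 0*φ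 by ring, show (2:ℝ)*0+1*φ = 1*φ by ring, show (4:ℝ)*0+0*φ = 0*φ by ring, show (4:ℝ)*0+1*φ = 1*φ by ring, show (4:ℝ)*0+2*φ = 2*φ by ring, show (6:ℝ)*0+1*φ = 1*φ by ring, show (6:ℝ)*0+2*φ = 2*φ by ring, show (8:ℝ)*0+2*φ = 2*φ by ring, show (8:ℝ)*0+3*φ = 3*φ by ring, show (10:ℝ)*0+3*φ = 3*φ by ring, show (12:ℝ)*0+4*φ = 4*φ by ring]
    ring
  rw [hF2]
  have hpi := Real.pi_ne_zero
  field_simp
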